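/- arXiv:1704.02437 — 8 statements merged into one kernel-verified Lean document; each statement's English description precedes it below -/
import Mathlib

section
/- Let n ≥ 3 and let W = M[R_n, R_{n-1}, C_n] be the subalgebra of M_n(K) consisting of all matrices whose n-th row, (n-1)-th row, and n-th column are zero. Then W is a nonunital intersection, i.e., W is the intersection of two unital subalgebras of M_n(K) but W itself has no unity, and the dimension of W over K is (n-1)(n-2). -/
/-!
Put `a = n - 1` and `b = n - 2`. Then `W` is the intersection of `M[R_a, C_a]`, whose unity is the
idempotent `1 - E_aa`, with the algebra of matrices whose column `a` vanishes and whose rows `a` and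
`b` agree, whose unity is `1 - E_aa + E_ab`. A unity `e` of `W` is impossible: `E_0b ∈ W` and
`E_0b * e = E_0b` force `e_bb = 1`, while row `b` of `e` vanishes. Finally, `W` is the space of
matrices supported on the remaining `(n - 2) × (n - 1)` block.
-/

namespace NonUnitalSubalgebra

variable {R A : Type*} [CommSemiring R] [NonUnitalNonAssocSemiring A] [Module R A]

def HasUnity (U : NonUnitalSubalgebra R A) : Prop :=
  ∃ e ∈ U, ∀ u ∈ U, e * u = u ∧ u * e = u

end NonUnitalSubalgebra

namespace Matrix

variable {ι R : Type*} [Fintype ι] [CommSemiring R]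

variable (R) in
/-- `M[R_S, C_T]` in the paper's notation. -/
def zeroRowsColsSubalgebra (S T : Finset ι) : NonUnitalSubalgebra R (Matrix ι ι R) where
  carrier := {A | ∀ i j, i ∈ S ∨ j ∈ T → A i j = 0}
  add_mem' {A B} hA hB i j hij := by rw [add_apply, hA i j hij, hB i j hij, add_zero]
  zero_mem' _ _ _ := rfl
  mul_mem' {A B} hA hB i j hij := by
    rw [mul_apply]
    rcases hij with hi | hj
    · exact Finset.sum_eq_zero fun k _ => by rw [hA i k (.inl hi), zero_mul]
    · exact Finset.sum_eq_zero fun k _ => by rw [hB k j (.inr hj), mul_zero]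
  smul_mem' c A hA i j hij := by rw [smul_apply, hA i j hij, smul_zero]

theorem mem_zeroRowsColsSubalgebra {S T : Finset ι} {A : Matrix ι ι R} :
    A ∈ zeroRowsColsSubalgebra R S T ↔ ∀ i j, i ∈ S ∨ j ∈ T → A i j = 0 :=
  Iff.rfl

variable (R) in
def zeroColRowEqSubalgebra (a b : ι) : NonUnitalSubalgebra R (Matrix ι ι R) where
  carrier := {A | (∀ i, A i a = 0) ∧ A a = A b}
  add_mem' {A B} hA hB :=
    ⟨fun i => by rw [add_apply, hA.1 i, hB.1 i, add_zero],
      funext fun j => by rw [add_apply, add_apply, hA.2, hB.2]⟩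
  zero_mem' := ⟨fun _ => rfl, rfl⟩
  mul_mem' {A B} hA hB :=
    ⟨fun i => by rw [mul_apply]; exact Finset.sum_eq_zero fun k _ => by rw [hB.1 k, mul_zero],
      funext fun j => by rw [mul_apply, mul_apply, hA.2]⟩
  smul_mem' c A hA :=
    ⟨fun i => by rw [smul_apply, hA.1 i, smul_zero],
      funext fun j => by rw [smul_apply, smul_apply, hA.2]⟩

theorem mem_zeroColRowEqSubalgebra {a b : ι} {A : Matrix ι ι R} :
    A ∈ zeroColRowEqSubalgebra R a b ↔ (∀ i, A i a = 0) ∧ A a = A b :=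
  Iff.rfl

variable [DecidableEq ι]

theorem zeroRowsColsSubalgebra_pair_eq_inf (a b : ι) :
    zeroRowsColsSubalgebra R {a, b} {a} =
      zeroRowsColsSubalgebra R {a} {a} ⊓ zeroColRowEqSubalgebra R a b := by
  ext A
  simp only [NonUnitalAlgebra.mem_inf, mem_zeroRowsColsSubalgebra, mem_zeroColRowEqSubalgebra,
    Finset.mem_insert, Finset.mem_singleton]
  constructor
  · intro hA
    refine ⟨fun i j hij => hA i j (hij.imp_left .inl), fun i => hA i a (.inr rfl), ?_⟩
    funext j
    rw [hA a j (.inl (.inl rfl)), hA b j (.inl (.inr rfl))]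
  · rintro ⟨hU, -, hrow⟩ i j ((rfl | rfl) | rfl)
    · exact hU i j (.inl rfl)
    · rw [← congrFun hrow j]; exact hU a j (.inl rfl)
    · exact hU i j (.inr rfl)

theorem hasUnity_zeroRowsColsSubalgebra_self (S : Finset ι) :
    (zeroRowsColsSubalgebra R S S).HasUnity := by
  refine ⟨diagonal fun i => if i ∈ S then 0 else 1, fun i j hij => ?_, fun u hu => ⟨?_, ?_⟩⟩
  · by_cases h : i = j
    · subst h; simp [hij.elim id id]
    · exact diagonal_apply_ne _ h
  · ext i j
    by_cases hi : i ∈ S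
    · simp [diagonal_mul, hi, hu i j (.inl hi)]
    · simp [diagonal_mul, hi]
  · ext i j
    by_cases hj : j ∈ S
    · simp [mul_diagonal, hj, hu i j (.inr hj)]
    · simp [mul_diagonal, hj]

theorem not_hasUnity_zeroRowsColsSubalgebra [Nontrivial R] {S T : Finset ι} {i j : ι}
    (hi : i ∉ S) (hj : j ∉ T) (hjS : j ∈ S) : ¬ (zeroRowsColsSubalgebra R S T).HasUnity := by
  rintro ⟨e, he, hunit⟩
  have hE : single i j (1 : R) ∈ zeroRowsColsSubalgebra R S T := by
    rintro k l (hk | hl)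
    · exact single_apply_of_row_ne (ne_of_mem_of_not_mem hk hi).symm _ _ _
    · exact single_apply_of_col_ne _ _ (ne_of_mem_of_not_mem hl hj).symm _
  have := congrFun₂ (hunit _ hE).2 i j
  simp [he j j (.inl hjS)] at this

/-- Left multiplication by `single a b 1` copies row `b` into row `a`; right multiplication copies
column `a`, which vanishes, into column `b`. -/
theorem hasUnity_zeroColRowEqSubalgebra {a b : ι} (hab : a ≠ b) :
    (zeroColRowEqSubalgebra R a b).HasUnity := by
  refine ⟨diagonal (fun i => if i = a then 0 else 1) + single a b 1,
    ⟨fun i => ?_, funext fun j => ?_⟩, fun u ⟨hcol, hrow⟩ => ⟨?_, ?_⟩⟩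
  · by_cases h : i = a <;> simp [h, hab.symm]
  · by_cases h : j = b <;> simp [h, hab, single_apply, diagonal_apply, eq_comm]
  · ext i j
    by_cases hi : i = a
    · subst hi; simp [add_mul, diagonal_mul, hrow]
    · simp [add_mul, diagonal_mul, hi]
  · ext i j
    by_cases hj : j = a
    · subst hj; simp [mul_add, mul_diagonal, hcol, hab]
    · by_cases hj' : j = b
      · subst hj'; simp [mul_add, mul_diagonal, hcol, hj]
      · simp [mul_add, mul_diagonal, hj, hj']

variable (R) in
def zeroRowsColsSubalgebraEquivMatrix (S T : Finset ι) :
    zeroRowsColsSubalgebra R S T ≃ₗ[R] Matrix {i // i ∉ S} {j // j ∉ T} R where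
  toFun A := (A : Matrix ι ι R).toBlock (· ∉ S) (· ∉ T)
  map_add' _ _ := rfl
  map_smul' _ _ := rfl
  invFun M := ⟨of fun i j => if h : i ∉ S ∧ j ∉ T then M ⟨i, h.1⟩ ⟨j, h.2⟩ else 0,
    fun i j hij => dif_neg (by tauto)⟩
  left_inv A := Subtype.ext <| ext fun i j => by
    by_cases h : i ∉ S ∧ j ∉ T
    · exact dif_pos h
    · exact (dif_neg h).trans (A.2 i j (by tauto)).symm
  right_inv M := ext fun i j => dif_pos ⟨i.2, j.2⟩

theorem finrank_zeroRowsColsSubalgebra [StrongRankCondition R] (S T : Finset ι) :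
    Module.finrank R (zeroRowsColsSubalgebra R S T) =
      (Fintype.card ι - S.card) * (Fintype.card ι - T.card) := by
  rw [(zeroRowsColsSubalgebraEquivMatrix R S T).finrank_eq, Module.finrank_matrix,
    Module.finrank_self, mul_one, Fintype.card_subtype_compl, Fintype.card_subtype_compl,
    Fintype.card_coe, Fintype.card_coe]

end Matrix

open Matrix

/-- For `n ≥ 3`, `W = M[Rₙ, Rₙ₋₁, Cₙ]` (matrices whose `n`-th row,
`(n-1)`-th row and `n`-th column vanish) is a nonunital intersection: it is the
intersection of two unital (non-unital-type) subalgebras of `Mₙ(K)`, it has no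
unity itself, and its dimension over `K` is `(n-1)(n-2)`. -/
theorem stmt0 (K : Type*) [Field K] (n : ℕ) (hn : 3 ≤ n)
    (W : NonUnitalSubalgebra K (Matrix (Fin n) (Fin n) K))
    (hW : ∀ A : Matrix (Fin n) (Fin n) K,
      A ∈ W ↔ (∀ j, A ⟨n - 1, by omega⟩ j = 0) ∧ (∀ j, A ⟨n - 2, by omega⟩ j = 0) ∧
        (∀ i, A i ⟨n - 1, by omega⟩ = 0)) :
    (∃ U V : NonUnitalSubalgebra K (Matrix (Fin n) (Fin n) K),
        (∃ e ∈ U, ∀ u ∈ U, e * u = u ∧ u * e = u) ∧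
        (∃ e ∈ V, ∀ u ∈ V, e * u = u ∧ u * e = u) ∧
        W = U ⊓ V) ∧
    (¬ ∃ e ∈ W, ∀ u ∈ W, e * u = u ∧ u * e = u) ∧
    Module.finrank K W = (n - 1) * (n - 2) := by
  set a : Fin n := ⟨n - 1, by omega⟩
  set b : Fin n := ⟨n - 2, by omega⟩
  have hab : a ≠ b := by simp only [a, b, ne_eq, Fin.mk.injEq]; omega
  obtain rfl : W = zeroRowsColsSubalgebra K {a, b} {a} := by
    ext A
    simp only [hW, mem_zeroRowsColsSubalgebra, Finset.mem_insert, Finset.mem_singleton]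
    constructor
    · rintro ⟨hrow_a, hrow_b, hcol_a⟩ i j ((rfl | rfl) | rfl)
      exacts [hrow_a j, hrow_b j, hcol_a i]
    · intro h
      exact ⟨fun j => h a j (by simp), fun j => h b j (by simp), fun i => h i a (by simp)⟩
  refine ⟨⟨_, _, hasUnity_zeroRowsColsSubalgebra_self {a}, hasUnity_zeroColRowEqSubalgebra hab,
    zeroRowsColsSubalgebra_pair_eq_inf a b⟩,
    not_hasUnity_zeroRowsColsSubalgebra (i := ⟨0, by omega⟩) (j := b) ?_ ?_ ?_, ?_⟩
  · simp only [Finset.mem_insert, Finset.mem_singleton, a, b, Fin.ext_iff]; omega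
  · simpa using hab.symm
  · simp
  · rw [finrank_zeroRowsColsSubalgebra, Finset.card_pair hab, Finset.card_singleton,
      Fintype.card_fin, mul_comm]
end

section
/- Let n ≥ 2 and let A = I + E_{n,n-1} ∈ M_n(K), which is invertible with inverse I − E_{n,n-1}. Then the subalgebra W = M[R_n, R_{n-1}, C_n] of matrices with zero n-th row, zero (n-1)-th row, and zero n-th column equals the intersection of the two subalgebras A^{-1} M[R_n,C_n] A and M[R_n,C_n], where M[R_n,C_n] is the subalgebra of matrices with zero n-th row and zero n-th column. -/
/-!
With `E = E_{n,n-1}` we have `E² = 0`, so `I ± E` are mutually inverse. If `N` has zero `n`-th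
column then `N E = 0`, hence `(I - E) N (I + E) = N - E N`: conjugation only subtracts row `n-1`
of `N` from its row `n`. For `N ∈ M[R_n, C_n]` the conjugate therefore has `n`-th row equal to
minus row `n-1` of `N`, and it lies in `M[R_n, C_n]` again exactly when that row vanishes.
-/

namespace Matrix

variable {ι R : Type*} [Fintype ι] [DecidableEq ι] [Ring R]

/-- The paper's `M[R_e, C_e]`. -/
def zeroRowCol (e : ι) : Set (Matrix ι ι R) :=
  {M | (∀ j, M e j = 0) ∧ ∀ i, M i e = 0}

lemma single_mul_single_self_of_ne {e f : ι} (hfe : f ≠ e) (c : R) :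
    single e f c * single e f c = 0 :=
  single_mul_single_of_ne c e f e hfe c

lemma one_add_mul_one_sub_of_mul_self_eq_zero {N : Matrix ι ι R} (hN : N * N = 0) :
    (1 + N) * (1 - N) = 1 := by
  rw [show (1 + N) * (1 - N) = 1 - N * N by noncomm_ring, hN, sub_zero]

lemma one_sub_mul_one_add_of_mul_self_eq_zero {N : Matrix ι ι R} (hN : N * N = 0) :
    (1 - N) * (1 + N) = 1 := by
  rw [show (1 - N) * (1 + N) = 1 - N * N by noncomm_ring, hN, sub_zero]

lemma mul_single_eq_zero_of_col_eq_zero {M : Matrix ι ι R} {e : ι} (hM : ∀ i, M i e = 0)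
    (f : ι) (c : R) : M * single e f c = 0 := by
  ext i j
  by_cases hj : j = f
  · subst hj
    simp [mul_single_apply_same, hM]
  · simp [mul_single_apply_of_ne _ _ _ _ _ hj]

lemma one_sub_single_mul_mul_one_add_single {N : Matrix ι ι R} {e : ι} (hN : ∀ i, N i e = 0)
    (f : ι) : (1 - single e f 1) * N * (1 + single e f 1) = N - single e f 1 * N := by
  rw [show (1 - single e f 1) * N * (1 + single e f 1)
      = N - single e f 1 * N + N * single e f 1 - single e f 1 * (N * single e f 1) by
        noncomm_ring, mul_single_eq_zero_of_col_eq_zero hN, mul_zero, add_zero, sub_zero]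

theorem setOf_rows_col_eq_zero_eq_image_inter {e f : ι} (hfe : f ≠ e) :
    {M : Matrix ι ι R | (∀ j, M e j = 0) ∧ (∀ j, M f j = 0) ∧ ∀ i, M i e = 0} =
      (fun N => (1 - single e f 1) * N * (1 + single e f 1)) '' zeroRowCol e ∩ zeroRowCol e := by
  ext M
  constructor
  · rintro ⟨hMe, hMf, hMcol⟩
    have hNcol : ∀ i, (M + single e f (1 : R) * M) i e = 0 := fun i => by
      rcases eq_or_ne i e with rfl | hi <;> simp [*]
    refine ⟨⟨M + single e f 1 * M, ⟨fun j => ?_, hNcol⟩, ?_⟩, fun j => hMe j, hMcol⟩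
    · simp [hMe, hMf]
    · dsimp only
      rw [one_sub_single_mul_mul_one_add_single hNcol, mul_add,
        ← mul_assoc, single_mul_single_self_of_ne hfe 1, zero_mul]
      abel
  · rintro ⟨⟨N, ⟨hNe, hNcol⟩, rfl⟩, hMe, hMcol⟩
    simp only [one_sub_single_mul_mul_one_add_single hNcol] at hMe hMcol ⊢
    have hNf : ∀ j, N f j = 0 := fun j => by
      simpa [hNe] using hMe j
    refine ⟨hMe, fun j => ?_, hMcol⟩
    simp [hfe, hNf]

end Matrix

/-- For `n ≥ 2` and `A = I + Eₙ,ₙ₋₁` (invertible with inverse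
`I - Eₙ,ₙ₋₁`), the subalgebra `W = M[Rₙ, Rₙ₋₁, Cₙ]` equals the intersection
`A⁻¹ M[Rₙ,Cₙ] A ∩ M[Rₙ,Cₙ]`. -/
theorem stmt1 (K : Type*) [Field K] (n : ℕ) (hn : 2 ≤ n)
    (A : Matrix (Fin n) (Fin n) K)
    (hA : A = 1 + Matrix.single ⟨n - 1, by omega⟩ ⟨n - 2, by omega⟩ 1)
    (A' : Matrix (Fin n) (Fin n) K)
    (hA' : A' = 1 - Matrix.single ⟨n - 1, by omega⟩ ⟨n - 2, by omega⟩ 1)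
    (MRC : Set (Matrix (Fin n) (Fin n) K))
    (hMRC : MRC = {M | (∀ j, M ⟨n - 1, by omega⟩ j = 0) ∧ (∀ i, M i ⟨n - 1, by omega⟩ = 0)})
    (W : Set (Matrix (Fin n) (Fin n) K))
    (hW : W = {M | (∀ j, M ⟨n - 1, by omega⟩ j = 0) ∧ (∀ j, M ⟨n - 2, by omega⟩ j = 0) ∧
        (∀ i, M i ⟨n - 1, by omega⟩ = 0)}) :
    A * A' = 1 ∧ A' * A = 1 ∧
    W = ((fun M => A' * M * A) '' MRC) ∩ MRC := by
  have hfe : (⟨n - 2, by omega⟩ : Fin n) ≠ ⟨n - 1, by omega⟩ := by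
    simp only [ne_eq, Fin.mk.injEq]
    omega
  have hEE := Matrix.single_mul_single_self_of_ne (R := K) hfe 1
  subst hA hA' hMRC hW
  exact ⟨Matrix.one_add_mul_one_sub_of_mul_self_eq_zero hEE,
    Matrix.one_sub_mul_one_add_of_mul_self_eq_zero hEE,
    Matrix.setOf_rows_col_eq_zero_eq_image_inter hfe⟩
end

section
/- For any nonunital subalgebra L of M_n(K), the dimension of L over K is at most n(n−1). -/
/-!
Let `A = L + K·1` be the unital algebra generated by `L`; since `1 ∉ L`, `dim A = dim L + 1`.
If `A = Mₙ(K)`, then `L` is a two-sided ideal of the simple ring `Mₙ(K)` not containing `1`, so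
`L = 0`. Otherwise `A` is a proper unital subalgebra, and `dim A ≤ n² - n + 1` by bounding below
the dimension of its orthogonal `A^⊥` for the trace form `(x, y) ↦ tr (x y)`:
* if `A` leaves a subspace `0 < W < Kⁿ` invariant, every map `Kⁿ → Kⁿ/W → W → Kⁿ` is orthogonal
  to `A` (its products with `A` square to zero), so `dim A^⊥ ≥ dim (Kⁿ/W) · dim W ≥ n - 1`;
* if `A` is irreducible, pick `x ∈ A^⊥` and `v` with `x v ≠ 0`; then `A x ⊆ A^⊥` and
  `y ↦ y v` maps `A^⊥` onto `A (x v) = Kⁿ`, so `dim A^⊥ ≥ n`.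
-/

open Module

namespace NonUnitalSubalgebra

variable {R A : Type*} [Field R] [Ring A] [Algebra R A] {L : NonUnitalSubalgebra R A}

lemma finrank_adjoin_of_one_notMem [FiniteDimensional R A] (h1 : (1 : A) ∉ L) :
    finrank R (Algebra.adjoin R (L : Set A)) = finrank R L + 1 := by
  have : FiniteDimensional R L := FiniteDimensional.finiteDimensional_submodule L.toSubmodule
  rw [((unitizationAlgEquiv L h1).toLinearEquiv.symm.trans
    (Unitization.linearEquiv R R L)).finrank_eq, finrank_prod, finrank_self, add_comm]

lemma eq_bot_of_adjoin_eq_top [IsSimpleRing A] (h1 : (1 : A) ∉ L)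
    (htop : Algebra.adjoin R (L : Set A) = ⊤) : L = ⊥ := by
  have hsplit (a : A) : ∃ c : R, a - algebraMap R A c ∈ L := by
    obtain ⟨x, rfl⟩ : a ∈ (unitization L).range := by simp [unitization_range, htop]
    exact ⟨x.fst, by simp⟩
  have hleft {a l : A} (hl : l ∈ L) : a * l ∈ L := by
    obtain ⟨c, hc⟩ := hsplit a
    simpa [sub_mul, Algebra.algebraMap_eq_smul_one] using
      L.add_mem (L.mul_mem hc hl) (L.smul_mem c hl)
  have hright {l a : A} (hl : l ∈ L) : l * a ∈ L := by
    obtain ⟨c, hc⟩ := hsplit a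
    simpa [mul_sub, Algebra.algebraMap_eq_smul_one] using
      L.add_mem (L.mul_mem hl hc) (L.smul_mem c hl)
  let I := TwoSidedIdeal.mk' (L : Set A) L.zero_mem L.add_mem L.neg_mem hleft hright
  obtain hI | hI := IsSimpleRing.simple.eq_bot_or_eq_top I
  · ext x
    simpa [I, NonUnitalAlgebra.mem_bot] using congrArg (x ∈ ·) hI
  · have : (1 : A) ∈ I := hI ▸ TwoSidedIdeal.mem_top A
    exact absurd (by simpa [I] using this) h1

end NonUnitalSubalgebra

namespace Matrix

open LinearMap

variable {K : Type*} [Field K] {ι : Type*} [Fintype ι]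

noncomputable def traceForm : LinearMap.BilinForm K (Matrix ι ι K) :=
  (LinearMap.mul K (Matrix ι ι K)).compr₂ (traceLinearMap ι K K)

@[simp] lemma traceForm_apply (a b : Matrix ι ι K) : traceForm a b = trace (a * b) := rfl

lemma traceForm_nondegenerate :
    (traceForm : LinearMap.BilinForm K (Matrix ι ι K)).Nondegenerate :=
  ⟨fun a ha => ext_iff_trace_mul_right.2 fun x => by simpa using ha x,
   fun a ha => ext_iff_trace_mul_left.2 fun x => by simpa using ha x⟩

lemma finrank_add_finrank_orthogonal_traceForm (S : Submodule K (Matrix ι ι K)) :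
    finrank K S + finrank K (traceForm.orthogonal S) = Fintype.card ι * Fintype.card ι := by
  rw [LinearMap.BilinForm.finrank_add_finrank_orthogonal', traceForm_nondegenerate.ker_eq_bot,
    inf_bot_eq, finrank_bot, add_zero, finrank_matrix, Module.finrank_self, mul_one]

variable [DecidableEq ι]

lemma trace_eq_zero_of_mul_self_eq_zero {x : Matrix ι ι K} (h : x * x = 0) : trace x = 0 :=
  (isNilpotent_trace_of_isNilpotent ⟨2, by rwa [pow_two]⟩).eq_zero

variable (W : Submodule K (ι → K))

noncomputable def ofHomQuotient : ((ι → K) ⧸ W →ₗ[K] W) →ₗ[K] Matrix ι ι K :=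
  toMatrix'.toLinearMap ∘ₗ llcomp K (ι → K) W (ι → K) W.subtype ∘ₗ lcomp K W W.mkQ

lemma ofHomQuotient_mulVec (g : (ι → K) ⧸ W →ₗ[K] W) (v : ι → K) :
    ofHomQuotient W g *ᵥ v = g (W.mkQ v) := by
  simp [ofHomQuotient, ← Matrix.toLin'_apply]

lemma ofHomQuotient_injective : Function.Injective (ofHomQuotient W) := by
  intro g h hgh
  refine LinearMap.ext fun q => ?_
  obtain ⟨v, rfl⟩ := W.mkQ_surjective q
  simpa [ofHomQuotient_mulVec] using congrArg (· *ᵥ v) hgh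

lemma finrank_range_ofHomQuotient :
    finrank K (range (ofHomQuotient W)) = finrank K ((ι → K) ⧸ W) * finrank K W := by
  rw [finrank_range_of_inj (ofHomQuotient_injective W), finrank_linearMap]

lemma range_ofHomQuotient_le_orthogonal {S : Submodule K (Matrix ι ι K)}
    (hS : ∀ a ∈ S, ∀ v ∈ W, a *ᵥ v ∈ W) :
    range (ofHomQuotient W) ≤ traceForm.orthogonal S := by
  rintro _ ⟨g, rfl⟩ a ha
  change trace (a * ofHomQuotient W g) = 0
  refine trace_eq_zero_of_mul_self_eq_zero (ext_iff_mulVec.2 fun v => ?_)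
  have hker : W.mkQ (a *ᵥ (g (W.mkQ v) : ι → K)) = 0 :=
    (Submodule.Quotient.mk_eq_zero W).2 (hS a ha _ (g _).2)
  simp only [← mulVec_mulVec, ofHomQuotient_mulVec, hker, map_zero, ZeroMemClass.coe_zero,
    mulVec_zero, zero_mulVec]

lemma finrank_add_card_sub_one_le_of_invariant {S : Submodule K (Matrix ι ι K)}
    (hS : ∀ a ∈ S, ∀ v ∈ W, a *ᵥ v ∈ W) (hW₀ : W ≠ ⊥) (hW₁ : W ≠ ⊤) :
    finrank K S + (Fintype.card ι - 1) ≤ Fintype.card ι * Fintype.card ι := by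
  have hT := Submodule.finrank_mono (range_ofHomQuotient_le_orthogonal W hS)
  rw [finrank_range_ofHomQuotient] at hT
  have hsum := W.finrank_quotient_add_finrank
  have hlt := Submodule.finrank_lt hW₁
  rw [finrank_fintype_fun_eq_card] at hsum hlt
  have hd : 1 ≤ finrank K W := Nat.one_le_iff_ne_zero.2 (mt Submodule.finrank_eq_zero.1 hW₀)
  have hq : 1 ≤ finrank K ((ι → K) ⧸ W) := by omega
  have hprod : finrank K ((ι → K) ⧸ W) + finrank K W ≤
      finrank K ((ι → K) ⧸ W) * finrank K W + 1 := by nlinarith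
  have := finrank_add_finrank_orthogonal_traceForm S
  omega

lemma card_le_finrank_orthogonal_traceForm (A : Subalgebra K (Matrix ι ι K))
    (hA : ∀ W : Submodule K (ι → K), (∀ a ∈ A, ∀ v ∈ W, a *ᵥ v ∈ W) → W = ⊥ ∨ W = ⊤)
    {x : Matrix ι ι K} (hx : x ∈ traceForm.orthogonal (Subalgebra.toSubmodule A))
    (hx₀ : x ≠ 0) :
    Fintype.card ι ≤ finrank K (traceForm.orthogonal (Subalgebra.toSubmodule A)) := by
  obtain ⟨v, hv⟩ : ∃ v, x *ᵥ v ≠ 0 := by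
    by_contra! h
    exact hx₀ (ext_iff_mulVec.2 fun v => by simp [h])
  let U := (Subalgebra.toSubmodule A).map ((mulVecBilin K K).flip (x *ᵥ v))
  have hU : U = ⊤ := by
    refine (hA U ?_).resolve_left fun hU₀ => hv ?_
    · rintro a ha _ ⟨b, hb, rfl⟩
      exact ⟨a * b, A.mul_mem ha hb, by simp [mulVecBilin_apply]⟩
    · have : x *ᵥ v ∈ U := ⟨1, A.one_mem, by simp⟩
      simpa [hU₀] using this
  have hcover : (traceForm.orthogonal (Subalgebra.toSubmodule A)).map
      ((mulVecBilin K K).flip v) = ⊤ := by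
    refine eq_top_iff.2 fun u _ => ?_
    obtain ⟨b, hb, rfl⟩ : u ∈ U := hU ▸ Submodule.mem_top
    refine ⟨b * x, fun s hs => ?_, by simp [mulVecBilin_apply]⟩
    simpa [mul_assoc] using hx (s * b) (A.mul_mem hs hb)
  calc Fintype.card ι = finrank K ((traceForm.orthogonal (Subalgebra.toSubmodule A)).map
        ((mulVecBilin K K).flip v)) := by rw [hcover, finrank_top, finrank_fintype_fun_eq_card]
    _ ≤ _ := Submodule.finrank_map_le _ _

theorem finrank_add_card_sub_one_le_of_ne_top {A : Subalgebra K (Matrix ι ι K)} (hA : A ≠ ⊤) :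
    finrank K A + (Fintype.card ι - 1) ≤ Fintype.card ι * Fintype.card ι := by
  have hdim := finrank_add_finrank_orthogonal_traceForm (Subalgebra.toSubmodule A)
  rw [Subalgebra.finrank_toSubmodule] at hdim
  by_cases hirr : ∀ W : Submodule K (ι → K), (∀ a ∈ A, ∀ v ∈ W, a *ᵥ v ∈ W) → W = ⊥ ∨ W = ⊤
  · have hA' : traceForm.orthogonal (Subalgebra.toSubmodule A) ≠ ⊥ := fun h => hA <| by
      rw [h, finrank_bot, add_zero] at hdim
      refine Algebra.toSubmodule_eq_top.1 (Submodule.eq_top_of_finrank_eq ?_)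
      rw [Subalgebra.finrank_toSubmodule, hdim, finrank_matrix, finrank_self, mul_one]
    obtain ⟨x, hx, hx₀⟩ := Submodule.exists_mem_ne_zero_of_ne_bot hA'
    have := card_le_finrank_orthogonal_traceForm A hirr hx hx₀
    omega
  · push Not at hirr
    obtain ⟨W, hW, hW₀, hW₁⟩ := hirr
    simpa using
      finrank_add_card_sub_one_le_of_invariant W (S := Subalgebra.toSubmodule A) hW hW₀ hW₁

end Matrix

theorem stmt3_general (K : Type*) [Field K] (n : ℕ)
    (L : NonUnitalSubalgebra K (Matrix (Fin n) (Fin n) K))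
    (hL : ¬ ∃ e ∈ L, ∀ u ∈ L, e * u = u ∧ u * e = u) :
    Module.finrank K L ≤ n * (n - 1) := by
  have h1 : (1 : Matrix (Fin n) (Fin n) K) ∉ L := fun h =>
    hL ⟨1, h, fun u _ => ⟨one_mul u, mul_one u⟩⟩
  by_cases htop : Algebra.adjoin K (L : Set (Matrix (Fin n) (Fin n) K)) = ⊤
  · -- the simplicity of `Matrix (Fin n) (Fin n) K` needs `n ≠ 0`
    have : NeZero n := ⟨by
      rintro rfl
      exact h1 (Subsingleton.elim (0 : Matrix (Fin 0) (Fin 0) K) 1 ▸ L.zero_mem)⟩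
    have hzero : finrank K L = 0 := by
      rw [L.eq_bot_of_adjoin_eq_top h1 htop]
      exact Submodule.finrank_eq_zero.2 NonUnitalAlgebra.toSubmodule_bot
    simp [hzero]
  · have := Matrix.finrank_add_card_sub_one_le_of_ne_top htop
    rw [L.finrank_adjoin_of_one_notMem h1, Fintype.card_fin] at this
    rw [Nat.mul_sub_one]
    omega

/-- Any nonunital subalgebra `L` of `Mₙ(K)` has dimension at most
`n(n-1)` over `K`. -/
theorem stmt3 (K : Type*) [Field K] [CharZero K] (n : ℕ)
    (L : NonUnitalSubalgebra K (Matrix (Fin n) (Fin n) K))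
    (hL : ¬ ∃ e ∈ L, ∀ u ∈ L, e * u = u ∧ u * e = u) :
    Module.finrank K L ≤ n * (n - 1) :=
  stmt3_general K n L hL
end

section
/- If L is a nonunital subalgebra of M_n(K), then L + K·I ≠ M_n(K); that is, the K-span of L together with the identity matrix I is a proper subspace of M_n(K). -/
/-- If `L` is a nonunital subalgebra of `Mₙ(K)`, then
`L + K·I ≠ Mₙ(K)`. -/
theorem stmt4 (K : Type*) [Field K] [CharZero K] (n : ℕ)
    (L : NonUnitalSubalgebra K (Matrix (Fin n) (Fin n) K))
    (hL : ¬ ∃ e ∈ L, ∀ u ∈ L, e * u = u ∧ u * e = u) :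
    L.toSubmodule ⊔ Submodule.span K {(1 : Matrix (Fin n) (Fin n) K)} ≠ ⊤ := by
  intro htop
  apply hL
  rcases Nat.eq_zero_or_pos n with rfl | hn
  · -- trivial matrix ring
    refine ⟨0, L.zero_mem, fun u hu => ?_⟩
    constructor <;> exact Subsingleton.elim _ _
  · have : NeZero n := ⟨hn.ne'⟩
    -- L is a two-sided ideal
    have hmul_left : ∀ {x y : Matrix (Fin n) (Fin n) K}, y ∈ L → x * y ∈ L := by
      intro x y hy
      have hx : x ∈ L.toSubmodule ⊔ Submodule.span K {(1 : Matrix (Fin n) (Fin n) K)} := by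
        rw [htop]; trivial
      rcases Submodule.mem_sup.mp hx with ⟨l, hl, z, hz, rfl⟩
      rcases Submodule.mem_span_singleton.mp hz with ⟨c, rfl⟩
      have : (l + c • (1 : Matrix (Fin n) (Fin n) K)) * y = l * y + c • y := by
        rw [add_mul, smul_mul_assoc, one_mul]
      rw [this]
      exact L.add_mem (L.mul_mem hl hy) (L.smul_mem c hy)
    have hmul_right : ∀ {x y : Matrix (Fin n) (Fin n) K}, x ∈ L → x * y ∈ L := by
      intro x y hx
      have hy : y ∈ L.toSubmodule ⊔ Submodule.span K {(1 : Matrix (Fin n) (Fin n) K)} := by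
        rw [htop]; trivial
      rcases Submodule.mem_sup.mp hy with ⟨l, hl, z, hz, rfl⟩
      rcases Submodule.mem_span_singleton.mp hz with ⟨c, rfl⟩
      have : x * (l + c • (1 : Matrix (Fin n) (Fin n) K)) = x * l + c • x := by
        rw [mul_add, mul_smul_comm, mul_one]
      rw [this]
      exact L.add_mem (L.mul_mem hx hl) (L.smul_mem c hx)
    set J : TwoSidedIdeal (Matrix (Fin n) (Fin n) K) :=
      TwoSidedIdeal.mk' (L : Set (Matrix (Fin n) (Fin n) K)) L.zero_mem
        (fun hx hy => L.add_mem hx hy) (fun hx => L.neg_mem hx)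
        hmul_left hmul_right with hJ
    have hmemJ : ∀ x, x ∈ J ↔ x ∈ L := by
      intro x; rw [hJ, TwoSidedIdeal.mem_mk']; rfl
    by_cases hbot : ∀ x ∈ L, x = (0 : Matrix (Fin n) (Fin n) K)
    · exact ⟨0, L.zero_mem, fun u hu => by rw [hbot u hu]; simp⟩
    · push_neg at hbot
      obtain ⟨x, hxL, hx0⟩ := hbot
      have h1 : (1 : Matrix (Fin n) (Fin n) K) ∈ J :=
        IsSimpleRing.one_mem_of_ne_zero_mem J hx0 ((hmemJ x).mpr hxL)
      exact ⟨1, (hmemJ 1).mp h1, fun u hu => ⟨one_mul u, mul_one u⟩⟩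
end

section
/- Any subalgebra B of M_n(K) that properly contains M[R_n], the subalgebra of matrices whose n-th row is zero, must contain the identity matrix I. -/
/-- Any subalgebra `B` of `Mₙ(K)` properly containing `M[Rₙ]`
(matrices with zero `n`-th row) contains the identity matrix. -/
theorem stmt6 (K : Type*) [Field K] [CharZero K] (n : ℕ) (hn : 0 < n)
    (B : NonUnitalSubalgebra K (Matrix (Fin n) (Fin n) K))
    (hB : {A : Matrix (Fin n) (Fin n) K | ∀ j, A ⟨n - 1, by omega⟩ j = 0}
        ⊂ (B : Set (Matrix (Fin n) (Fin n) K))) :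
    (1 : Matrix (Fin n) (Fin n) K) ∈ B := by
  set e : Fin n := ⟨n - 1, by omega⟩ with he
  have hR : ∀ A : Matrix (Fin n) (Fin n) K, (∀ j, A e j = 0) → A ∈ B := fun A hA => hB.1 hA
  obtain ⟨M, hMB, hM⟩ : ∃ M ∈ B, ¬ ∀ j, M e j = 0 := by
    obtain ⟨M, hMB, hM⟩ := Set.exists_of_ssubset hB
    exact ⟨M, hMB, hM⟩
  push_neg at hM
  obtain ⟨j, hj⟩ := hM
  set N : Matrix (Fin n) (Fin n) K :=
    Matrix.of (fun i k => if i = e then M i k else 0) with hN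
  have hNB : N ∈ B := by
    have h1 : M - N ∈ B := hR _ (fun k => by simp [hN])
    have := B.sub_mem hMB h1
    simpa using this
  have key : ∀ D : Matrix (Fin n) (Fin n) K, D ∈ B →
      (∀ k, D e k = if k = e then 1 else 0) → (1 : Matrix (Fin n) (Fin n) K) ∈ B := by
    intro D hD hDe
    have h2 : (1 : Matrix (Fin n) (Fin n) K) - D ∈ B := by
      refine hR _ (fun k => ?_)
      simp [Matrix.one_apply, hDe k, eq_comm]
    have := B.add_mem hD h2
    simpa using this
  by_cases hc : ∃ k, k ≠ e ∧ M e k ≠ 0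
  · obtain ⟨k, hk, hk0⟩ := hc
    have hE : Matrix.single k e (1 : K) ∈ B :=
      hR _ (fun l => by simp only [Matrix.single, Matrix.of_apply, ite_eq_right_iff, and_imp]; exact fun h _ => absurd h hk)
    have hprod : N * Matrix.single k e (1 : K) ∈ B := B.mul_mem hNB hE
    refine key ((M e k)⁻¹ • (N * Matrix.single k e 1)) (B.smul_mem _ hprod) ?_
    intro l
    have hcalc : (N * Matrix.single k e (1 : K)) e l
        = if l = e then M e k else 0 := by
      rw [Matrix.mul_apply, Finset.sum_eq_single k]
      · by_cases hl : l = e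
        · simp [Matrix.single, hN, hl]
        · simp only [Matrix.single, Matrix.of_apply, if_neg hl]
          rw [if_neg, mul_zero]
          exact fun h => hl h.2.symm
      · intro b _ hb
        simp only [Matrix.single, Matrix.of_apply, ite_eq_right_iff, and_imp,
          mul_ite, mul_one, mul_zero]
        exact fun h _ => absurd h.symm hb
      · simp
    simp only [Matrix.smul_apply, hcalc, smul_eq_mul]
    by_cases hl : l = e <;> simp [hl, inv_mul_cancel₀ hk0]
  · push_neg at hc
    have hje : M e e ≠ 0 := by
      by_cases h : j = e
      · rwa [h] at hj
      · exact absurd (hc j h) hj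
    refine key ((M e e)⁻¹ • N) (B.smul_mem _ hNB) ?_
    intro k
    by_cases hk : k = e
    · subst hk; simp [hN, inv_mul_cancel₀ hje]
    · simp [hN, hc k hk, hk]
end

section
/- If a subalgebra U of M_n(K) has a unity e with e ≠ I (i.e., e ∈ U satisfies eu = ue = u for all u ∈ U but e is not the identity matrix), then the dimension of U over K is at most (n−1)². -/
/-!
Since `e u = u = u e` for every `u ∈ U`, each `u` maps the image `V = e Kⁿ` into itself and is
determined by its restriction to `V`; so `U` embeds linearly into `End V`, of dimension
`(dim V)²`. The unity `e` is idempotent, and an idempotent with full image is the identity, so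
`e ≠ I` forces `dim V ≤ n - 1`.
-/

open Module LinearMap

namespace LinearMap

theorem IsIdempotentElem.eq_one_of_range_eq_top {R M : Type*} [Semiring R] [AddCommMonoid M]
    [Module R M] {e : End R M}
    (he : IsIdempotentElem e) (h : range e = ⊤) : e = 1 :=
  LinearMap.ext fun _ => he.mem_range_iff.mp (h ▸ Submodule.mem_top)

section

variable {R M : Type*} [CommRing R] [AddCommGroup M] [Module R M]

def restrictRange (e : End R M) (W : Submodule R (End R M)) (hW : ∀ u ∈ W, e * u = u) :
    W →ₗ[R] End R (range e) where
  toFun u := (u : End R M).restrict fun x _ => hW u u.2 ▸ mem_range_self e ((u : End R M) x)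
  map_add' _ _ := rfl
  map_smul' _ _ := rfl

theorem restrictRange_injective (e : End R M) (W : Submodule R (End R M))
    (hW : ∀ u ∈ W, e * u = u ∧ u * e = u) :
    Function.Injective (restrictRange e W fun u hu => (hW u hu).1) := by
  rw [← ker_eq_bot, Submodule.eq_bot_iff]
  intro u hu
  refine Subtype.ext <| LinearMap.ext fun x => ?_
  calc (u : End R M) x = (u * e : End R M) x := by rw [(hW u u.2).2]
    _ = 0 := congr_arg Subtype.val (LinearMap.congr_fun hu ⟨e x, mem_range_self e x⟩)

end

theorem finrank_le_finrank_range_sq {K V : Type*} [Field K] [AddCommGroup V] [Module K V]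
    [FiniteDimensional K V] (e : End K V) (W : Submodule K (End K V))
    (hW : ∀ u ∈ W, e * u = u ∧ u * e = u) :
    finrank K W ≤ finrank K (range e) ^ 2 :=
  calc finrank K W ≤ finrank K (End K (range e)) :=
        finrank_le_finrank_of_injective (restrictRange_injective e W hW)
    _ = finrank K (range e) ^ 2 := by rw [finrank_linearMap, sq]

end LinearMap

theorem stmt8_general (K : Type*) [Field K] (n : ℕ)
    (U : NonUnitalSubalgebra K (Matrix (Fin n) (Fin n) K))
    (e : Matrix (Fin n) (Fin n) K) (heU : e ∈ U)
    (he : ∀ u ∈ U, e * u = u ∧ u * e = u)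
    (hne : e ≠ 1) :
    Module.finrank K U ≤ (n - 1) ^ 2 := by
  let φ := Matrix.toLinAlgEquiv' (R := K) (n := Fin n)
  let W := U.toSubmodule.map φ.toLinearEquiv.toLinearMap
  have hW : ∀ u ∈ W, φ e * u = u ∧ u * φ e = u := by
    rintro _ ⟨u, hu, rfl⟩
    simp only [AlgEquiv.toLinearEquiv_toLinearMap, AlgEquiv.toLinearMap_apply, ← map_mul]
    exact ⟨congr_arg φ (he u hu).1, congr_arg φ (he u hu).2⟩
  have hrange : range (φ e) ≠ ⊤ := fun htop =>
    hne <| φ.injective <| by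
      rw [map_one]
      exact (IsIdempotentElem.map (f := φ) (he e heU).1).eq_one_of_range_eq_top htop
  have hrank : finrank K (range (φ e)) ≤ n - 1 :=
    Nat.le_sub_one_of_lt (by simpa using Submodule.finrank_lt hrange)
  calc finrank K U = finrank K W := (LinearEquiv.finrank_map_eq φ.toLinearEquiv U.toSubmodule).symm
    _ ≤ finrank K (range (φ e)) ^ 2 := finrank_le_finrank_range_sq _ W hW
    _ ≤ (n - 1) ^ 2 := Nat.pow_le_pow_left hrank 2

/-- If a subalgebra `U` of `Mₙ(K)` has a unity `e ≠ I`, then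
`dim U ≤ (n-1)²`. -/
theorem stmt8 (K : Type*) [Field K] [CharZero K] (n : ℕ)
    (U : NonUnitalSubalgebra K (Matrix (Fin n) (Fin n) K))
    (e : Matrix (Fin n) (Fin n) K) (heU : e ∈ U)
    (he : ∀ u ∈ U, e * u = u ∧ u * e = u)
    (hne : e ≠ 1) :
    Module.finrank K U ≤ (n - 1) ^ 2 :=
  stmt8_general K n U e heU he hne
end

section
/- Every proper subalgebra L of M_n(K) (not assumed to contain any identity element) has dimension over K at most n(n−1) + 1 = n² − n + 1. -/
/-!
Let `V` be the orthogonal of `L` for the nondegenerate form `(a, b) ↦ tr (a * b)`: a nonzero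
`L`-bimodule of dimension `n² - dim L`. Suppose `dim L ≥ n² - n + 2`, so that `dim V ≤ n - 2`.
For `z ∈ V` the map `x ↦ x * z` sends `L` into `V`, while its kernel lies in that of
`x ↦ (x * z * e₁, x * z * e₂)`, of codimension `2n` whenever `z e₁, z e₂` are independent; as
`dim L > (n - 2) + (n² - 2n)`, every element of `V` has rank one, say `a bᵀ ∈ V`. The same
count shows that `L a` and `bᵀ L` are not lines, so `V ∋ (x a) bᵀ + a (bᵀ y)` with `x a ∉ K a`
and `bᵀ y ∉ K bᵀ`: a matrix of rank two.
-/

open Module Function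

namespace Submodule

variable {K M N : Type*} [Field K] [AddCommGroup M] [Module K M] [FiniteDimensional K M]
  [AddCommGroup N] [Module K N]

lemma finrank_add_le_finrank_map_add (p : Submodule K M) {f : M →ₗ[K] N}
    (hf : Surjective f) : finrank K p + finrank K N ≤ finrank K (p.map f) + finrank K M := by
  have hp := (f.domRestrict p).finrank_range_add_finrank_ker
  have hM := f.finrank_range_add_finrank_ker
  rw [LinearMap.range_domRestrict] at hp
  rw [LinearMap.range_eq_top.mpr hf, finrank_top] at hM
  have hker : finrank K (LinearMap.ker (f.domRestrict p)) ≤ finrank K (LinearMap.ker f) := by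
    rw [LinearMap.ker_domRestrict, ← finrank_map_subtype_eq]
    exact finrank_mono (map_comap_le _ _)
  omega

end Submodule

namespace Matrix

variable {K : Type*} [Field K] {ι l n : Type*} [Fintype ι] [Fintype n]

lemma exists_mulVec_eq_single [DecidableEq ι] {y : ι → n → K} (hy : LinearIndependent K y) :
    ∃ E : Matrix ι n K, ∀ i, E *ᵥ y i = Pi.single i 1 := by
  classical
  obtain ⟨g, hg⟩ := LinearMap.exists_leftInverse_of_injective (Fintype.linearCombination K y)
    (LinearMap.ker_eq_bot.mpr (linearIndependent_iff_injective_fintypeLinearCombination.mp hy))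
  refine ⟨LinearMap.toMatrix' g, fun i => ?_⟩
  rw [LinearMap.toMatrix'_mulVec, ← one_smul K (y i), ← Fintype.linearCombination_apply_single,
    ← LinearMap.comp_apply, hg, LinearMap.id_apply]

lemma exists_mulVec_eq {y : ι → n → K} (hy : LinearIndependent K y) (z : ι → l → K) :
    ∃ x : Matrix l n K, ∀ i, x *ᵥ y i = z i := by
  classical
  obtain ⟨E, hE⟩ := exists_mulVec_eq_single hy
  exact ⟨(of z)ᵀ * E, fun i => by rw [← mulVec_mulVec, hE, mulVec_single_one]; rfl⟩

lemma exists_sum_vecMulVec_mulVec_eq [Fintype l] {b : ι → n → K} (hb : LinearIndependent K b)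
    (a : ι → l → K) : ∃ e : ι → n → K, ∀ j, (∑ i, vecMulVec (a i) (b i)) *ᵥ e j = a j := by
  classical
  obtain ⟨E, hE⟩ := exists_mulVec_eq_single hb
  refine ⟨E, fun j => ?_⟩
  have hdot : ∀ i, b i ⬝ᵥ E j = (Pi.single i 1 : ι → K) j := fun i => by
    rw [dotProduct_comm]
    exact congrFun (hE i) j
  simp [sum_mulVec, vecMulVec_mulVec, hdot, Pi.single_apply]

lemma exists_eq_vecMulVec (z : Matrix l n K)
    (hz : ∀ e : Fin 2 → n → K, ¬LinearIndependent K fun i => z *ᵥ e i) :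
    ∃ a b, z = vecMulVec a b := by
  classical
  by_cases hz0 : z = 0
  · exact ⟨0, 0, by simp [hz0]⟩
  obtain ⟨j₀, hj₀⟩ : ∃ j, z.col j ≠ 0 := by
    by_contra! h
    exact hz0 (ext fun i j => congrFun (h j) i)
  have hdep : ∀ j, ∃ c : K, c • z.col j₀ = z.col j := fun j => by
    have h := hz ![Pi.single j₀ 1, Pi.single j 1]
    rw [show (fun i => z *ᵥ ![Pi.single j₀ 1, Pi.single j 1] i) = ![z.col j₀, z.col j] by
      ext i : 1; fin_cases i <;> simp, LinearIndependent.pair_iff' hj₀] at h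
    push Not at h
    exact h
  choose b hb using hdep
  exact ⟨z.col j₀, b, ext fun i j => by
    rw [vecMulVec_apply, mul_comm]
    exact (congrFun (hb j) i).symm⟩

variable (l) in
def mulVecAt (v : n → K) : Matrix l n K →ₗ[K] l → K where
  toFun x := x *ᵥ v
  map_add' x y := add_mulVec x y v
  map_smul' c x := smul_mulVec c x v

@[simp] lemma mulVecAt_apply (v : n → K) (x : Matrix l n K) : mulVecAt l v x = x *ᵥ v := rfl

lemma pi_mulVecAt_surjective {y : ι → n → K} (hy : LinearIndependent K y) :
    Surjective (LinearMap.pi fun i => mulVecAt l (y i)) :=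
  fun z => (exists_mulVec_eq hy z).imp fun _ hx => funext hx

lemma mulVecAt_surjective {v : n → K} (hv : v ≠ 0) : Surjective (mulVecAt l v) :=
  fun z => (exists_mulVec_eq (linearIndependent_unique_iff.mpr hv :
    LinearIndependent K fun _ : Unit => v) fun _ => z).imp fun _ hx => hx ()

lemma finrank_add_card_mul_le_finrank_map_mulRight (p : Submodule K (Matrix n n K))
    (v : Matrix n n K) {e : ι → n → K} (he : LinearIndependent K fun i => v *ᵥ e i) :
    finrank K p + Fintype.card ι * Fintype.card n ≤
      finrank K (p.map (LinearMap.mulRight K v)) + Fintype.card n * Fintype.card n := by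
  have h := p.finrank_add_le_finrank_map_add (pi_mulVecAt_surjective (l := n) he)
  have hfac : (LinearMap.pi fun i => mulVecAt n (v *ᵥ e i)) =
      (LinearMap.pi fun i => mulVecAt n (e i)) ∘ₗ LinearMap.mulRight K v := by
    ext
    simp [mulVec_mulVec]
  rw [hfac, Submodule.map_comp, finrank_matrix, finrank_pi_fintype] at h
  simp only [finrank_fintype_fun_eq_card, Finset.sum_const, Finset.card_univ, smul_eq_mul,
    finrank_self, mul_one] at h
  have := Submodule.finrank_map_le (LinearMap.pi fun i => mulVecAt n (e i))
    (p.map (LinearMap.mulRight K v))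
  omega

variable [Fintype l]

lemma exists_mem_linearIndependent_pair_mulVec {p : Submodule K (Matrix l n K)}
    (hp : Fintype.card l * Fintype.card n + 2 ≤ finrank K p + Fintype.card l)
    {v : n → K} (hv : v ≠ 0) {c : l → K} (hc : c ≠ 0) :
    ∃ x ∈ p, LinearIndependent K ![c, x *ᵥ v] := by
  have h := p.finrank_add_le_finrank_map_add (mulVecAt_surjective (l := l) hv)
  rw [finrank_matrix, finrank_self, mul_one, finrank_fintype_fun_eq_card] at h
  have hle : ¬p.map (mulVecAt l v) ≤ K ∙ c := fun hle =>
    (Submodule.finrank_mono hle).not_gt (by rw [finrank_span_singleton hc]; omega)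
  obtain ⟨_, ⟨x, hx, rfl⟩, hxc⟩ := SetLike.not_le_iff_exists.mp hle
  refine ⟨x, hx, (LinearIndependent.pair_iff' hc).mpr fun a ha => hxc ?_⟩
  exact Submodule.mem_span_singleton.mpr ⟨a, ha⟩

lemma exists_mem_linearIndependent_pair_vecMul {p : Submodule K (Matrix n l K)}
    (hp : Fintype.card l * Fintype.card n + 2 ≤ finrank K p + Fintype.card l)
    {v : n → K} (hv : v ≠ 0) {c : l → K} (hc : c ≠ 0) :
    ∃ x ∈ p, LinearIndependent K ![c, v ᵥ* x] := by
  have hpt := LinearEquiv.finrank_map_eq (transposeLinearEquiv n l K K) p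
  obtain ⟨_, ⟨x, hx, rfl⟩, hxc⟩ := exists_mem_linearIndependent_pair_mulVec (hpt ▸ hp) hv hc
  exact ⟨x, hx, by simpa [mulVec_transpose] using hxc⟩

def traceMulForm : LinearMap.BilinForm K (Matrix n n K) :=
  (LinearMap.mul K (Matrix n n K)).compr₂ (traceLinearMap n K K)

@[simp] lemma traceMulForm_apply (a b : Matrix n n K) : traceMulForm a b = trace (a * b) := rfl

lemma ker_traceMulForm :
    LinearMap.ker (traceMulForm : LinearMap.BilinForm K (Matrix n n K)) = ⊥ :=
  LinearMap.ker_eq_bot'.mpr fun a ha => ext_iff_trace_mul_right.mpr fun x => by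
    simpa using LinearMap.congr_fun ha x

lemma finrank_add_finrank_traceMulForm_orthogonal (W : Submodule K (Matrix n n K)) :
    finrank K W + finrank K (traceMulForm.orthogonal W) = Fintype.card n * Fintype.card n := by
  rw [LinearMap.BilinForm.finrank_add_finrank_orthogonal', ker_traceMulForm, inf_bot_eq,
    finrank_bot, add_zero, finrank_matrix, finrank_self, mul_one]

end Matrix

namespace NonUnitalSubalgebra

open Matrix

variable {K : Type*} [Field K] {n : Type*} [Fintype n] {L : NonUnitalSubalgebra K (Matrix n n K)}

lemma mul_mem_traceMulForm_orthogonal_left {x a : Matrix n n K} (hx : x ∈ L)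
    (ha : a ∈ traceMulForm.orthogonal L.toSubmodule) :
    x * a ∈ traceMulForm.orthogonal L.toSubmodule := fun y hy => by
  simpa [← Matrix.mul_assoc] using ha (y * x) (L.mul_mem hy hx)

lemma mul_mem_traceMulForm_orthogonal_right {a x : Matrix n n K}
    (ha : a ∈ traceMulForm.orthogonal L.toSubmodule) (hx : x ∈ L) :
    a * x ∈ traceMulForm.orthogonal L.toSubmodule := fun y hy => by
  have h : trace (y * (a * x)) = trace (x * y * a) := by
    rw [← Matrix.mul_assoc, trace_mul_comm, Matrix.mul_assoc]
  simpa [h] using ha (x * y) (L.mul_mem hx hy)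

lemma traceMulForm_orthogonal_ne_bot (hL : L ≠ ⊤) :
    traceMulForm.orthogonal L.toSubmodule ≠ ⊥ := fun hV => by
  have hdim := finrank_add_finrank_traceMulForm_orthogonal L.toSubmodule
  rw [hV, finrank_bot, add_zero] at hdim
  exact hL (NonUnitalAlgebra.toSubmodule_eq_top.mp (Submodule.eq_top_of_finrank_eq
    (by rw [hdim, finrank_matrix, finrank_self, mul_one])))

lemma not_linearIndependent_mulVec_of_mem_traceMulForm_orthogonal
    (hL : Fintype.card n * Fintype.card n + 2 ≤ finrank K L.toSubmodule + Fintype.card n)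
    {z : Matrix n n K} (hz : z ∈ traceMulForm.orthogonal L.toSubmodule) (e : Fin 2 → n → K) :
    ¬LinearIndependent K fun i => z *ᵥ e i := fun he => by
  have h := finrank_add_card_mul_le_finrank_map_mulRight L.toSubmodule z he
  have hmap :
      L.toSubmodule.map (LinearMap.mulRight K z) ≤ traceMulForm.orthogonal L.toSubmodule := by
    rintro _ ⟨x, hx, rfl⟩
    exact mul_mem_traceMulForm_orthogonal_left hx hz
  have := Submodule.finrank_mono hmap
  have hdim := finrank_add_finrank_traceMulForm_orthogonal L.toSubmodule
  rw [Fintype.card_fin] at h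
  omega

theorem finrank_le_of_ne_top (hL : L ≠ ⊤) :
    finrank K L ≤ Fintype.card n * (Fintype.card n - 1) + 1 := by
  by_contra! hlarge
  have hbig : Fintype.card n * Fintype.card n + 2 ≤ finrank K L.toSubmodule + Fintype.card n := by
    have := Nat.le_mul_self (Fintype.card n)
    rw [Nat.mul_sub_one] at hlarge
    change _ ≤ finrank K L + _
    omega
  obtain ⟨v, hvV, hv0⟩ :=
    Submodule.exists_mem_ne_zero_of_ne_bot (traceMulForm_orthogonal_ne_bot hL)
  obtain ⟨a, b, rfl⟩ := exists_eq_vecMulVec v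
    (not_linearIndependent_mulVec_of_mem_traceMulForm_orthogonal hbig hvV)
  obtain ⟨ha, hb⟩ : a ≠ 0 ∧ b ≠ 0 := by simpa [not_or] using hv0
  obtain ⟨x, hx, hax⟩ := exists_mem_linearIndependent_pair_mulVec (p := L.toSubmodule) hbig ha ha
  obtain ⟨y, hy, hby⟩ := exists_mem_linearIndependent_pair_vecMul (p := L.toSubmodule) hbig hb hb
  obtain ⟨e, he⟩ := exists_sum_vecMulVec_mulVec_eq (l := n)
    (LinearIndependent.pair_symm_iff.mp hby : LinearIndependent K ![b ᵥ* y, b]) ![a, x *ᵥ a]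
  refine not_linearIndependent_mulVec_of_mem_traceMulForm_orthogonal hbig ?_ e
    (by rwa [funext he])
  rw [Fin.sum_univ_two]
  refine Submodule.add_mem _ ?_ ?_
  · simpa [vecMulVec_mul] using mul_mem_traceMulForm_orthogonal_right hvV hy
  · simpa [mul_vecMulVec] using mul_mem_traceMulForm_orthogonal_left hx hvV

end NonUnitalSubalgebra

theorem stmt13_general (K : Type*) [Field K] (n : ℕ)
    (L : NonUnitalSubalgebra K (Matrix (Fin n) (Fin n) K))
    (hL : L ≠ ⊤) :
    Module.finrank K L ≤ n * (n - 1) + 1 := by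
  simpa using L.finrank_le_of_ne_top hL

/-- Every proper subalgebra `L` of `Mₙ(K)` (not assumed unital)
has dimension at most `n(n-1) + 1 = n² - n + 1` over `K`. -/
theorem stmt13 (K : Type*) [Field K] [CharZero K] (n : ℕ)
    (L : NonUnitalSubalgebra K (Matrix (Fin n) (Fin n) K))
    (hL : L ≠ ⊤) :
    Module.finrank K L ≤ n * (n - 1) + 1 :=
  stmt13_general K n L hL
end

section
/- Let F be a field of characteristic zero with algebraic closure F̄, and let A be an F-subspace of M_n(F) of dimension n−1. Suppose there exist a nonzero linear functional λ₁ on F̄^n and vectors x₁, ..., x_{n−1} ∈ F̄^n with λ₁(x_j) = 0 for all j, such that the rank-one matrices x₁⊗λ₁, ..., x_{n−1}⊗λ₁ (where (x⊗λ)(z) = λ(z)x, i.e., the matrix with (i,j) entry (x)_i λ(e_j)) are linearly independent over F̄ and span the F̄-span of the image of A in M_n(F̄) under the entrywise embedding F → F̄. Then A is F-conjugate to the span of the matrices E_{i,n}, i = 1, ..., n−1: there exists g ∈ GL(n,F) such that g A g^{-1} equals the F-span of {E_{1,n}, ..., E_{n-1,n}}. -/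
/-!
Over `F̄` every element of `A` is `y ⊗ λ₁` with `λ₁(y) = 0`. A nonzero element of `A` has a
nonzero row `c ∈ Fⁿ`, which is then a nonzero multiple of `λ₁`, so the rank-one description
descends to `F`: every `a ∈ A` is `x ⊗ c` with `c ⬝ x = 0`. Pick `g ∈ GL(n, F)` whose last row
is `c`; then `g (x ⊗ c) g⁻¹ = (g x) ⊗ eₙ`, and `(g x)ₙ = c ⬝ x = 0`, so `g A g⁻¹` lies in the
span of the `E_{i,n}`, `i < n`. That span has dimension at most `n - 1 = dim A`.
-/

section

open Matrix

variable {m n : Type*}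

theorem LinearMap.apply_eq_dotProduct_single {R : Type*} [CommSemiring R] [Fintype n]
    [DecidableEq n] (f : (n → R) →ₗ[R] R) (y : n → R) :
    f y = y ⬝ᵥ fun k => f (Pi.single k 1) := by
  conv_lhs => rw [← Finset.univ_sum_single y]
  simp only [map_sum, dotProduct]
  refine Finset.sum_congr rfl fun k _ => ?_
  rw [← smul_eq_mul, ← map_smul, ← Pi.single_smul, smul_eq_mul, mul_one]

namespace Matrix

theorem exists_eq_vecMulVec_of_mem_span {S ι : Type*} [CommSemiring S] [Fintype n]
    {L : n → S} {x : ι → n → S} (hx : ∀ j, x j ⬝ᵥ L = 0) {M : Matrix n n S}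
    (hM : M ∈ Submodule.span S (Set.range fun j => vecMulVec (x j) L)) :
    ∃ y, y ⬝ᵥ L = 0 ∧ M = vecMulVec y L := by
  induction hM using Submodule.span_induction with
  | mem M hM =>
    obtain ⟨j, rfl⟩ := hM
    exact ⟨x j, hx j, rfl⟩
  | zero => exact ⟨0, zero_dotProduct L, (zero_vecMulVec L).symm⟩
  | add M N _ _ hM hN =>
    obtain ⟨y, hy, rfl⟩ := hM
    obtain ⟨z, hz, rfl⟩ := hN
    exact ⟨y + z, by rw [add_dotProduct, hy, hz, add_zero], (add_vecMulVec y z L).symm⟩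
  | smul t M _ hM =>
    obtain ⟨y, hy, rfl⟩ := hM
    exact ⟨t • y, by rw [smul_dotProduct, hy, smul_zero], (smul_vecMulVec t y L).symm⟩

theorem exists_eq_vecMulVec_of_map_eq {K K' : Type*} [Field K] [CommRing K'] [Nontrivial K']
    (φ : K →+* K') {c : n → K} (hc : c ≠ 0) {a : Matrix m n K} {y : m → K'}
    (h : a.map φ = vecMulVec y (φ ∘ c)) : ∃ x, φ ∘ x = y ∧ a = vecMulVec x c := by
  obtain ⟨k, hk⟩ := Function.ne_iff.mp hc
  have hentry : ∀ i l, φ (a i l) = y i * φ (c l) := fun i l => congrFun (congrFun h i) l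
  have hx : ∀ i, φ (a i k / c k) = y i := fun i => by
    rw [div_eq_mul_inv, map_mul, hentry, mul_assoc, ← map_mul, mul_inv_cancel₀ hk, map_one,
      mul_one]
  refine ⟨fun i => a i k / c k, funext hx, ?_⟩
  ext i l
  apply φ.injective
  rw [vecMulVec_apply, map_mul, hentry, hx]

theorem exists_forall_mem_eq_vecMulVec {K K' : Type*} [Field K] [Field K'] [Fintype n]
    [Nonempty n] (φ : K →+* K') {A : Set (Matrix n n K)} {L : n → K'}
    (hA : ∀ a ∈ A, ∃ y, y ⬝ᵥ L = 0 ∧ a.map φ = vecMulVec y L) :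
    ∃ c : n → K, c ≠ 0 ∧ ∀ a ∈ A, ∃ x, x ⬝ᵥ c = 0 ∧ a = vecMulVec x c := by
  by_cases hA0 : ∃ a₀ ∈ A, a₀ ≠ 0
  swap
  · refine ⟨fun _ => 1, Function.ne_iff.mpr ⟨Classical.arbitrary n, one_ne_zero⟩,
      fun a ha => ⟨0, zero_dotProduct _, ?_⟩⟩
    rw [zero_vecMulVec]
    exact not_not.mp fun h => hA0 ⟨a, ha, h⟩
  obtain ⟨a₀, ha₀, hne⟩ := hA0
  obtain ⟨i₀, hi₀⟩ := Function.ne_iff.mp hne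
  obtain ⟨y₀, -, hy₀⟩ := hA a₀ ha₀
  have hrow : φ ∘ a₀ i₀ = y₀ i₀ • L := funext fun k => congrFun (congrFun hy₀ i₀) k
  have hs : y₀ i₀ ≠ 0 := by
    intro hs
    refine hi₀ (funext fun k => φ.injective ?_)
    simpa [hs] using congrFun hrow k
  refine ⟨a₀ i₀, hi₀, fun a ha => ?_⟩
  obtain ⟨y, hyL, hy⟩ := hA a ha
  obtain ⟨x, hxy, rfl⟩ := exists_eq_vecMulVec_of_map_eq φ hi₀ (y := (y₀ i₀)⁻¹ • y) <| by
    rw [hy, hrow, vecMulVec_smul, smul_vecMulVec, smul_inv_smul₀ hs]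
  refine ⟨x, φ.injective ?_, rfl⟩
  rw [RingHom.map_dotProduct, hxy, hrow, map_zero, smul_dotProduct, dotProduct_smul, hyL,
    smul_zero, smul_zero]

theorem exists_units_vecMul_eq {K : Type*} [Field K] [Fintype n] [DecidableEq n]
    {u v : n → K} (hu : u ≠ 0) (hv : v ≠ 0) : ∃ g : (Matrix n n K)ˣ, u ᵥ* ↑g = v := by
  obtain ⟨T, hT⟩ := Submodule.exists_linearEquiv_restrict_eq
    ((LinearEquiv.toSpanNonzeroSingleton K _ u hu).symm ≪≫ₗ
      LinearEquiv.toSpanNonzeroSingleton K _ v hv)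
  have hTu : T u = v := by
    have := (hT ⟨u, Submodule.mem_span_singleton_self u⟩).symm
    rwa [LinearEquiv.trans_apply, ← LinearEquiv.coord, LinearEquiv.coord_self,
      LinearEquiv.toSpanNonzeroSingleton_one] at this
  have hG : ∀ w, w ᵥ* LinearMap.toMatrixRight' (T : (n → K) →ₗ[K] n → K) = T w := fun w =>
    LinearMap.congr_fun (LinearMap.toMatrixRight'.symm_apply_apply (T : (n → K) →ₗ[K] n → K)) w
  have hunit : IsUnit (LinearMap.toMatrixRight' (T : (n → K) →ₗ[K] n → K)) := by
    rw [← vecMul_injective_iff_isUnit, funext hG]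
    exact T.injective
  exact ⟨hunit.unit, (hG u).trans hTu⟩

theorem units_mul_vecMulVec_mul_inv {R : Type*} [CommRing R] [Fintype n] [DecidableEq n]
    (g : (Matrix n n R)ˣ) (x u : n → R) :
    (g : Matrix n n R) * vecMulVec x (u ᵥ* (g : Matrix n n R)) * (↑g⁻¹ : Matrix n n R) =
      vecMulVec ((g : Matrix n n R) *ᵥ x) u := by
  rw [mul_vecMulVec, vecMulVec_mul, vecMul_vecMul, Units.mul_inv, vecMul_one]

theorem vecMulVec_single_one_mem {R : Type*} [Semiring R] [Fintype m] [DecidableEq m]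
    [DecidableEq n] (p : Submodule R (Matrix m n R)) {w : m → R} {l : n}
    (hp : ∀ i, w i ≠ 0 → single i l 1 ∈ p) : vecMulVec w (Pi.single l 1) ∈ p := by
  have hsum : vecMulVec w (Pi.single l 1) = ∑ i, w i • single i l (1 : R) := by
    ext i j
    simp [vecMulVec_apply, Matrix.sum_apply, single_apply, Pi.single_apply, ite_and, eq_comm]
  rw [hsum]
  refine p.sum_mem fun i _ => ?_
  by_cases hi : w i = 0
  · rw [hi, zero_smul]
    exact p.zero_mem
  · exact p.smul_mem _ (hp i hi)

theorem units_mul_vecMulVec_mul_inv_mem {R : Type*} [CommRing R] [Fintype n] [DecidableEq n]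
    (p : Submodule R (Matrix n n R)) (g : (Matrix n n R)ˣ) {x c : n → R} {l : n}
    (hgc : Pi.single l 1 ᵥ* (g : Matrix n n R) = c) (hxc : x ⬝ᵥ c = 0)
    (hp : ∀ i ≠ l, single i l 1 ∈ p) :
    (g : Matrix n n R) * vecMulVec x c * (↑g⁻¹ : Matrix n n R) ∈ p := by
  rw [← hgc, units_mul_vecMulVec_mul_inv]
  have hl : ((g : Matrix n n R) *ᵥ x) l = 0 := by
    rw [← one_mul ((_ *ᵥ x) l), ← single_dotProduct, dotProduct_mulVec, hgc, dotProduct_comm, hxc]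
  refine vecMulVec_single_one_mem p fun i hi => hp i ?_
  rintro rfl
  exact hi hl

theorem image_units_mul_mul_inv_eq {K : Type*} [Field K] [Fintype n] [DecidableEq n]
    (g : (Matrix n n K)ˣ) {A p : Submodule K (Matrix n n K)}
    (hA : ∀ a ∈ A, (g : Matrix n n K) * a * (↑g⁻¹ : Matrix n n K) ∈ p)
    (hp : Module.finrank K p ≤ Module.finrank K A) :
    (fun a => (g : Matrix n n K) * a * (↑g⁻¹ : Matrix n n K)) '' A = p := by
  let conj : Matrix n n K ≃ₗ[K] Matrix n n K :=
    (MulSemiringAction.toAlgEquiv K _ (ConjAct.toConjAct g)).toLinearEquiv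
  suffices hmap : A.map conj.toLinearMap = p by
    rw [← hmap, Submodule.map_coe]
    rfl
  refine Submodule.eq_of_le_of_finrank_le ?_ ?_
  · rintro _ ⟨a, ha, rfl⟩
    exact hA a ha
  · rwa [LinearEquiv.finrank_map_eq]

theorem single_mem_span_castLE {R : Type*} [Semiring R] {k : ℕ} (hk : k - 1 < k) (i j : Fin k)
    (hi : i ≠ ⟨k - 1, hk⟩) :
    single i j (1 : R) ∈ Submodule.span R
      (Set.range fun i : Fin (k - 1) => single (Fin.castLE (Nat.sub_le k 1) i) j 1) := by
  have : (i : ℕ) ≠ k - 1 := Fin.val_ne_of_ne hi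
  exact Submodule.subset_span ⟨⟨i, by omega⟩, rfl⟩

end Matrix

end

/-- Wallach, case a: Let `A ⊆ Mₙ(F)` be an `F`-subspace of
dimension `n-1` whose `F̄`-span has a basis of rank-one matrices
`x₁⊗λ₁, …, xₙ₋₁⊗λ₁` with `λ₁ ≠ 0` and `λ₁(xⱼ) = 0`.  Then `A` is `F`-conjugate
to the span of the matrices `E_{i,n}`, `i = 1, …, n-1`. -/
theorem stmt14 (F : Type*) [Field F] (n : ℕ) (hn : 0 < n)
    (A : Submodule F (Matrix (Fin n) (Fin n) F))
    (hdim : Module.finrank F A = n - 1)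
    (lam : (Fin n → AlgebraicClosure F) →ₗ[AlgebraicClosure F] AlgebraicClosure F)
    (x : Fin (n - 1) → (Fin n → AlgebraicClosure F))
    (hx : ∀ j, lam (x j) = 0)
    (B : Fin (n - 1) → Matrix (Fin n) (Fin n) (AlgebraicClosure F))
    (hB : ∀ j, B j = Matrix.of fun i k => x j i * lam (Pi.single k 1))
    (hspan : Submodule.span (AlgebraicClosure F) (Set.range B)
        = Submodule.span (AlgebraicClosure F)
            ((fun M : Matrix (Fin n) (Fin n) F =>
              M.map (algebraMap F (AlgebraicClosure F))) '' (A : Set (Matrix (Fin n) (Fin n) F)))) :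
    ∃ g : (Matrix (Fin n) (Fin n) F)ˣ,
      (fun a => (↑g : Matrix (Fin n) (Fin n) F) * a * (↑g⁻¹ : Matrix (Fin n) (Fin n) F)) ''
          (A : Set (Matrix (Fin n) (Fin n) F))
        = ↑(Submodule.span F (Set.range fun i : Fin (n - 1) =>
            Matrix.single (Fin.castLE (Nat.sub_le n 1) i) (⟨n - 1, by omega⟩ : Fin n) (1 : F))) := by
  set last : Fin n := ⟨n - 1, by omega⟩
  have : Nonempty (Fin n) := ⟨last⟩
  have hB_vecMulVec : B = fun j => Matrix.vecMulVec (x j) fun k => lam (Pi.single k 1) := funext hB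
  obtain ⟨c, hc, hAc⟩ := Matrix.exists_forall_mem_eq_vecMulVec
    (algebraMap F (AlgebraicClosure F)) (A := A) fun a ha => Matrix.exists_eq_vecMulVec_of_mem_span
      (fun j => (lam.apply_eq_dotProduct_single _).symm.trans (hx j))
      (hB_vecMulVec ▸ hspan ▸ Submodule.subset_span ⟨a, ha, rfl⟩)
  obtain ⟨g, hgc⟩ := Matrix.exists_units_vecMul_eq
    (Pi.single_ne_zero_iff.mpr one_ne_zero : Pi.single last (1 : F) ≠ 0) hc
  refine ⟨g, Matrix.image_units_mul_mul_inv_eq g (fun a ha => ?_) ?_⟩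
  · obtain ⟨y, hyc, rfl⟩ := hAc a ha
    exact Matrix.units_mul_vecMulVec_mul_inv_mem _ g hgc hyc fun i hi =>
      Matrix.single_mem_span_castLE _ i last hi
  · rw [hdim]
    exact (finrank_range_le_card _).trans (Fintype.card_fin _).le
end
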